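/- Let n be a positive integer, k a non-negative integer, and χ a Dirichlet character modulo n with conductor d. Then ∑_{a ∈ (Z/nZ)*} ∑_{b₁,...,b_k ∈ Z/nZ} gcd(a-1, b₁, ..., b_k, n)·χ(a) = φ(n)·σ_k(n/d). -/

import Mathlib

/-!
Expand `gcd(a - 1, b₁, …, b_k, n) = ∑_{e ∣ gcd} φ(e)` and swap the sums, so that each divisor `e`
of `n` contributes `φ(e)` times a character sum over the units `a ≡ 1 (mod e)` times the number
`(n/e)^k` of tuples `b ≡ 0 (mod e)`. Those units form the kernel of `(ℤ/n)ˣ → (ℤ/e)ˣ`, of order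
`φ(n)/φ(e)`, and `χ` sums over it to its order when it is trivial there, i.e. when `χ` factors
through `e`, i.e. when `d ∣ e`, and to `0` otherwise. What remains is
`φ(n) ∑_{d ∣ e ∣ n} (n/e)^k = φ(n) σ_k(n/d)`.
-/

open Finset

theorem Nat.gcd_gcd_eq_sum_totient {n : ℕ} (hn : n ≠ 0) (x y : ℕ) :
    Nat.gcd x (Nat.gcd y n) = ∑ e ∈ n.divisors, if e ∣ x ∧ e ∣ y then Nat.totient e else 0 := by
  rw [← Nat.sum_totient (Nat.gcd x (Nat.gcd y n)),
    ← Nat.divisors_filter_dvd_of_dvd hn ((Nat.gcd_dvd_right _ _).trans (Nat.gcd_dvd_right _ _)),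
    sum_filter]
  refine sum_congr rfl fun e he => ?_
  simp [Nat.dvd_gcd_iff, (Nat.mem_divisors.1 he).1]

theorem Nat.sum_divisors_filter_dvd_div {M : Type*} [AddCommMonoid M] {n d : ℕ} (hn : n ≠ 0)
    (hd : d ∣ n) (f : ℕ → M) :
    ∑ e ∈ n.divisors with d ∣ e, f (n / e) = ∑ m ∈ (n / d).divisors, f m := by
  obtain ⟨c, rfl⟩ := hd
  have hd0 : 0 < d := Nat.pos_of_ne_zero (left_ne_zero_of_mul hn)
  rw [Nat.mul_div_cancel_left c hd0, ← Nat.sum_div_divisors c f]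
  refine sum_nbij' (· / d) (d * ·) ?_ ?_ ?_ ?_ ?_ <;> simp only [mem_filter, Nat.mem_divisors]
  · rintro e ⟨⟨hed, -⟩, ⟨b, rfl⟩⟩
    rw [Nat.mul_div_cancel_left b hd0]
    exact ⟨Nat.dvd_of_mul_dvd_mul_left hd0 hed, right_ne_zero_of_mul hn⟩
  · rintro m ⟨hm, -⟩
    exact ⟨⟨Nat.mul_dvd_mul_left d hm, hn⟩, dvd_mul_right d m⟩
  · rintro e ⟨-, hde⟩
    exact Nat.mul_div_cancel' hde
  · rintro m -
    exact Nat.mul_div_cancel_left m hd0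
  · rintro e ⟨-, ⟨b, rfl⟩⟩
    rw [Nat.mul_div_cancel_left b hd0, Nat.mul_div_mul_left c b hd0]

@[to_additive]
theorem MonoidHom.card_ker_of_surjective {G H : Type*} [Group G] [Group H] [Finite H]
    (f : G →* H) (hf : Function.Surjective f) : Nat.card f.ker = Nat.card G / Nat.card H := by
  rw [← f.ker.card_mul_index, Subgroup.index_ker, f.range_eq_top.2 hf, Subgroup.card_top,
    Nat.mul_div_cancel _ Nat.card_pos]

namespace ZMod

variable {n e : ℕ} [NeZero n]

theorem dvd_val_iff_cast_eq_zero (x : ZMod n) : e ∣ x.val ↔ (x.cast : ZMod e) = 0 := by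
  rw [cast_eq_val, natCast_eq_zero_iff]

theorem dvd_val_sub_one_iff_unitsMap_eq_one (he : e ∣ n) (a : (ZMod n)ˣ) :
    e ∣ ((a : ZMod n) - 1).val ↔ unitsMap he a = 1 := by
  rw [dvd_val_iff_cast_eq_zero, Units.ext_iff, unitsMap_val, cast_sub he, cast_one he,
    sub_eq_zero, Units.val_one]

theorem card_forall_dvd_val {ι : Type*} [Finite ι] (he : e ∣ n) :
    Nat.card {b : ι → ZMod n // ∀ i, e ∣ (b i).val} = (n / e) ^ Nat.card ι := by
  have : NeZero e := .of_pos (Nat.pos_of_dvd_of_pos he n.pos_of_neZero)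
  set f := (castHom he (ZMod e)).toAddMonoidHom.compLeft ι
  have hker : ∀ b, b ∈ f.ker ↔ ∀ i, e ∣ (b i).val := fun b => by
    simp [f, funext_iff, dvd_val_iff_cast_eq_zero]
  rw [← Nat.card_congr (Equiv.subtypeEquivRight hker),
    AddMonoidHom.card_ker_of_surjective f (castHom_surjective he).comp_left, Nat.card_fun,
    Nat.card_fun, Nat.card_zmod, Nat.card_zmod, Nat.div_pow he]

theorem card_ker_unitsMap (he : e ∣ n) :
    Nat.card (unitsMap he).ker = Nat.totient n / Nat.totient e := by
  have : NeZero e := .of_pos (Nat.pos_of_dvd_of_pos he n.pos_of_neZero)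
  rw [MonoidHom.card_ker_of_surjective _ (unitsMap_surjective he), Nat.card_eq_fintype_card,
    Nat.card_eq_fintype_card, card_units_eq_totient, card_units_eq_totient]

end ZMod

namespace DirichletCharacter

variable {R : Type*} [CommRing R] [IsDomain R] {n e : ℕ} [NeZero n] (χ : DirichletCharacter R n)

theorem sum_unitsMap_eq_one (he : e ∣ n) :
    ∑ a : (ZMod n)ˣ with ZMod.unitsMap he a = 1, χ a =
      if χ.conductor ∣ e then ((Nat.totient n / Nat.totient e : ℕ) : R) else 0 := by
  classical
  set K := (ZMod.unitsMap he).ker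
  set f := (Units.coeHom R).comp (χ.toUnitHom.comp K.subtype)
  have hf : f = 1 ↔ χ.conductor ∣ e := by
    rw [← mem_conductorSet_iff_conductor_dvd χ he, mem_conductorSet_iff,
      factorsThrough_iff_ker_unitsMap he, DFunLike.ext_iff, SetLike.le_def, Subtype.forall]
    simp only [f, K, MonoidHom.comp_apply, Units.coeHom_apply, Subgroup.coe_subtype,
      MonoidHom.one_apply, MonoidHom.mem_ker, Units.ext_iff, Units.val_one]
  rw [sum_subtype (p := (· ∈ K)) _ (by simp [K])]
  exact (sum_hom_units f).trans (by simp only [hf, Fintype.card_eq_nat_card, K,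
    ZMod.card_ker_unitsMap he, Nat.cast_ite, Nat.cast_zero])

theorem totient_mul_sum_dvd_val_sub_one (he : e ∣ n) :
    Nat.totient e * ∑ a : (ZMod n)ˣ with e ∣ (↑a - 1 : ZMod n).val, χ a =
      if χ.conductor ∣ e then (Nat.totient n : R) else 0 := by
  simp only [ZMod.dvd_val_sub_one_iff_unitsMap_eq_one he, sum_unitsMap_eq_one χ he, mul_ite,
    mul_zero, ← Nat.cast_mul, Nat.mul_div_cancel' (Nat.totient_dvd_of_dvd he)]

end DirichletCharacter

/-- Main theorem: for a Dirichlet character `χ` mod `n` with conductor `d` and `k ≥ 0`,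
`∑_{a ∈ (ℤ/nℤ)*, b₁,…,b_k ∈ ℤ/nℤ} gcd(a-1, b₁, …, b_k, n) · χ(a) = φ(n) · σ_k(n/d)`. -/
theorem menon_dirichlet_identity (n k : ℕ) [NeZero n] (χ : DirichletCharacter ℂ n) :
    ∑ a : (ZMod n)ˣ, ∑ b : Fin k → ZMod n,
      (Nat.gcd ((a : ZMod n) - 1).val
        (Nat.gcd (Finset.univ.gcd fun i => (b i).val) n) : ℂ) * χ a =
      (Nat.totient n * ArithmeticFunction.sigma k (n / χ.conductor) : ℕ) := by
  have hn : n ≠ 0 := NeZero.ne n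
  have expand : ∀ (a : (ZMod n)ˣ) (b : Fin k → ZMod n),
      (Nat.gcd ((a : ZMod n) - 1).val
        (Nat.gcd (Finset.univ.gcd fun i => (b i).val) n) : ℂ) * χ a =
      ∑ e ∈ n.divisors, (Nat.totient e : ℂ) *
        (if e ∣ ((a : ZMod n) - 1).val then χ a else 0) *
        (if ∀ i, e ∣ (b i).val then 1 else 0) := by
    intro a b
    simp only [Nat.gcd_gcd_eq_sum_totient hn, Finset.dvd_gcd_iff, mem_univ, true_imp_iff,
      Nat.cast_sum, sum_mul]
    refine sum_congr rfl fun e _ => ?_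
    split_ifs <;> simp_all
  have card_eq_sum_boole : ∀ e, (Nat.card {b : Fin k → ZMod n // ∀ i, e ∣ (b i).val} : ℂ) =
      ∑ b : Fin k → ZMod n, if ∀ i, e ∣ (b i).val then 1 else 0 := fun e => by
    rw [sum_boole, Nat.card_eq_fintype_card, Fintype.card_subtype]
  calc _ = ∑ e ∈ n.divisors, (Nat.totient e *
          ∑ a : (ZMod n)ˣ with e ∣ (↑a - 1 : ZMod n).val, χ a) *
          (Nat.card {b : Fin k → ZMod n // ∀ i, e ∣ (b i).val} : ℂ) := by
        simp only [expand, card_eq_sum_boole, sum_filter, mul_sum, sum_mul]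
        exact sum_comm.trans ((sum_congr rfl fun b _ => sum_comm).trans sum_comm)
    _ = ∑ e ∈ n.divisors with χ.conductor ∣ e, ((Nat.totient n * (n / e) ^ k : ℕ) : ℂ) := by
        rw [sum_filter]
        refine sum_congr rfl fun e he => ?_
        obtain ⟨hen, -⟩ := Nat.mem_divisors.1 he
        rw [χ.totient_mul_sum_dvd_val_sub_one hen, ZMod.card_forall_dvd_val hen, Nat.card_fin]
        split_ifs <;> push_cast <;> ring
    _ = _ := by
        rw [← Nat.cast_sum, ← mul_sum,
          Nat.sum_divisors_filter_dvd_div hn χ.conductor_dvd_level (· ^ k),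
          ArithmeticFunction.sigma_apply]
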